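/- For the maximal subgroup U'_tt of W(E6) stabilizing two triplets whose decompositions meet in type B (intersection matrix with diagonal 5 and off-diagonal 2), the order of U'_tt is 8. -/

import Mathlib

open Finset

/-- The Picard lattice `ℤ^7` of a smooth cubic surface in the blown-up model,
with basis `l, e₁, …, e₆`. -/
abbrev Pic : Type := Fin 7 → ℤ

/-- The intersection form `diag(1, -1, …, -1)`. -/
def inter (u v : Pic) : ℤ := u 0 * v 0 - ∑ i : Fin 6, u i.succ * v i.succ

/-- The class `l` of a general line in `P²`. -/
def lcl : Pic := fun j => if j = 0 then 1 else 0

/-- The classes `e i` of the exceptional curves. -/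
def ee (i : Fin 6) : Pic := fun j => if j = i.succ then 1 else 0

/-- The 6 lines `a i = e i`. -/
def A (i : Fin 6) : Pic := ee i

/-- The 6 lines `b i = 2l - e₁ - ⋯ - e₆ + e i`. -/
def B (i : Fin 6) : Pic := (2 : ℤ) • lcl - (∑ k : Fin 6, ee k) + ee i

/-- The 15 lines `c i j = l - e i - e j`. -/
def C (i j : Fin 6) : Pic := lcl - ee i - ee j

/-- The hyperplane class `h = 3l - e₁ - ⋯ - e₆`. -/
def hcl : Pic := (3 : ℤ) • lcl - ∑ k : Fin 6, ee k

/-- The canonical class `K = -h`. -/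
def Kcl : Pic := -hcl

/-- The set of the 27 lines on a smooth cubic surface (blown-up model). -/
def lines : Finset Pic :=
  (univ.image A) ∪ (univ.image B) ∪
    ((univ ×ˢ univ : Finset (Fin 6 × Fin 6)).filter (fun p => p.1 ≠ p.2)).image
      (fun p => C p.1 p.2)

/-- The 27 lines as a type. -/
abbrev Line : Type := ↥lines

/-- The Weyl group `W(E₆)`: the permutations of the 27 lines preserving the
intersection pairing. -/
def WE6 : Subgroup (Equiv.Perm Line) where
  carrier := {σ | ∀ x y : Line, inter (σ x).1 (σ y).1 = inter x.1 y.1}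
  one_mem' := fun _ _ => rfl
  mul_mem' := by
    intro a b ha hb x y
    simpa [Equiv.Perm.mul_apply] using (ha (b x) (b y)).trans (hb x y)
  inv_mem' := by
    intro a ha x y
    have h := ha (a⁻¹ x) (a⁻¹ y)
    simpa using h.symm

/-- The subgroup of permutations of the 27 lines stabilizing a given set `P` of classes. -/
def Stab (P : Finset Pic) : Subgroup (Equiv.Perm Line) where
  carrier := {σ | ∀ x : Line, x.1 ∈ P ↔ (σ x).1 ∈ P}
  one_mem' := fun _ => Iff.rfl
  mul_mem' := by
    intro a b ha hb x
    simpa [Equiv.Perm.mul_apply] using (hb x).trans (ha (b x))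
  inv_mem' := by
    intro a ha x
    have h := ha (a⁻¹ x)
    simpa using h.symm

/-- The three 9-line sets of the decomposition `St_{(123)(456)}`. -/
def T1 : Finset Pic := {A 0, A 1, A 2, B 0, B 1, B 2, C 0 1, C 0 2, C 1 2}

def T2 : Finset Pic := {A 3, A 4, A 5, B 3, B 4, B 5, C 3 4, C 3 5, C 4 5}

def T3 : Finset Pic :=
  {C 0 3, C 0 4, C 0 5, C 1 3, C 1 4, C 1 5, C 2 3, C 2 4, C 2 5}

/-- The three 9-line sets of the decomposition `St_{(12)(34)(56)}`. -/
def T1' : Finset Pic := {A 0, B 3, C 0 3, B 2, A 1, C 1 2, C 0 2, C 1 3, C 4 5}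

def T2' : Finset Pic := {A 2, B 5, C 2 5, B 4, A 3, C 3 4, C 2 4, C 3 5, C 0 1}

def T3' : Finset Pic := {A 4, B 1, C 1 4, B 0, A 5, C 0 5, C 0 4, C 1 5, C 2 3}

/-- `U'_tt`: the maximal subgroup of `W(E₆)` stabilizing the two triplets whose
decompositions meet in type B, i.e. stabilizing each of the six 9-line sets. -/
def Utt' : Subgroup (Equiv.Perm Line) :=
  WE6 ⊓ Stab T1 ⊓ Stab T2 ⊓ Stab T3 ⊓ Stab T1' ⊓ Stab T2' ⊓ Stab T3'

/-!
Every element of `U'_tt` preserves the intersection form and each of the nine cells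
`T_i ∩ T'_j`. A line is determined by its cell and its intersection numbers with `b₁, a₅, a₃`,
so an element of `U'_tt` is determined by the images of these three lines, and each of them
stays in its two-element cell `{b₁, b₂}`, `{a₅, a₆}`, `{a₃, c₁₂}`: hence `|U'_tt| ≤ 8`.
Conversely the reflections in the roots `e₁ - e₂`, `e₅ - e₆` and `l - e₁ - e₂ - e₃` lie in
`U'_tt`, and they move these three lines independently within their cells.
-/

lemma inter_symm (u v : Pic) : inter u v = inter v u := by
  simp only [inter, mul_comm]

lemma inter_add_left (u v w : Pic) : inter (u + v) w = inter u w + inter v w := by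
  simp only [inter, Pi.add_apply, add_mul, sum_add_distrib]
  ring

lemma inter_smul_left (c : ℤ) (u w : Pic) : inter (c • u) w = c * inter u w := by
  simp only [inter, Pi.smul_apply, smul_eq_mul, mul_assoc, ← mul_sum]
  ring

lemma inter_add_right (u v w : Pic) : inter u (v + w) = inter u v + inter u w := by
  rw [inter_symm, inter_add_left, inter_symm v, inter_symm w]

lemma inter_smul_right (c : ℤ) (u w : Pic) : inter u (c • w) = c * inter u w := by
  rw [inter_symm, inter_smul_left, inter_symm]

def reflect (r v : Pic) : Pic := v + inter v r • r

section Reflection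

variable {r : Pic}

lemma inter_reflect (hr : inter r r = -2) (u v : Pic) :
    inter (reflect r u) (reflect r v) = inter u v := by
  simp only [reflect, inter_add_left, inter_add_right, inter_smul_left, inter_smul_right, hr,
    inter_symm r]
  ring

lemma reflect_involutive (hr : inter r r = -2) : Function.Involutive (reflect r) := by
  intro v
  simp only [reflect, inter_add_left, inter_smul_left, hr]
  module

end Reflection

def reflectLine (r : Pic) (hr : inter r r = -2) (hlines : ∀ v ∈ lines, reflect r v ∈ lines) :
    Equiv.Perm Line :=
  ((reflect_involutive hr).toPerm _).subtypePerm fun v =>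
    ⟨fun h => reflect_involutive hr v ▸ hlines _ h, hlines v⟩

def blocks : List (Finset Pic) := [T1, T2, T3, T1', T2', T3']

lemma mem_Utt'_iff {σ : Equiv.Perm Line} : σ ∈ Utt' ↔ σ ∈ WE6 ∧ ∀ P ∈ blocks, σ ∈ Stab P := by
  simp only [Utt', blocks, Subgroup.mem_inf, List.mem_cons, List.not_mem_nil, forall_eq_or_imp,
    and_assoc, or_false, forall_eq]

lemma reflectLine_mem_Utt' {r : Pic} (hr : inter r r = -2)
    (hlines : ∀ v ∈ lines, reflect r v ∈ lines)
    (hblocks : ∀ P ∈ blocks, ∀ v ∈ P, reflect r v ∈ P) : reflectLine r hr hlines ∈ Utt' := by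
  refine mem_Utt'_iff.2 ⟨fun x y => inter_reflect hr x.1 y.1, fun P hP x => ?_⟩
  exact ⟨hblocks P hP x.1, fun h => reflect_involutive hr x.1 ▸ hblocks P hP _ h⟩

-- Names of lines and roots carry the paper's 1-based indices: `s₁₂` is the reflection in
-- `e₁ - e₂ = ee 0 - ee 1`, and `a₅` below is `A 4`.
def s₁₂ : Equiv.Perm Line := reflectLine (ee 0 - ee 1) (by decide) (by decide)
def s₅₆ : Equiv.Perm Line := reflectLine (ee 4 - ee 5) (by decide) (by decide)
def s₁₂₃ : Equiv.Perm Line := reflectLine (lcl - ee 0 - ee 1 - ee 2) (by decide) (by decide)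

lemma s₁₂_mem : s₁₂ ∈ Utt' := reflectLine_mem_Utt' _ _ (by decide)
lemma s₅₆_mem : s₅₆ ∈ Utt' := reflectLine_mem_Utt' _ _ (by decide)
lemma s₁₂₃_mem : s₁₂₃ ∈ Utt' := reflectLine_mem_Utt' _ _ (by decide)

def profile (F : List Line) (z : Line) : List Bool × List ℤ :=
  (blocks.map fun P => decide (z.1 ∈ P), F.map fun y => inter z.1 y.1)

lemma profile_apply {σ : Equiv.Perm Line} (hσ : σ ∈ Utt') {F : List Line}
    (hF : ∀ y ∈ F, σ y = y) (x : Line) : profile F (σ x) = profile F x := by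
  obtain ⟨hW, hblocks⟩ := mem_Utt'_iff.1 hσ
  simp only [profile, Prod.mk.injEq]
  refine ⟨List.map_congr_left fun P hP => ?_, List.map_congr_left fun y hy => ?_⟩
  · exact decide_eq_decide.2 (hblocks P hP x).symm
  · rw [← hW x y, hF y hy]

lemma eq_one_of_fixes_of_injective_profile {σ : Equiv.Perm Line} (hσ : σ ∈ Utt')
    {F : List Line} (hF : ∀ y ∈ F, σ y = y) (hinj : Function.Injective (profile F)) : σ = 1 :=
  Equiv.ext fun x => hinj (profile_apply hσ hF x)

def a₃ : Line := ⟨A 2, by decide⟩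
def a₅ : Line := ⟨A 4, by decide⟩
def b₁ : Line := ⟨B 0, by decide⟩

lemma profile_injective : Function.Injective (profile [b₁, a₅, a₃]) := by decide

def frame (σ : Equiv.Perm Line) : Line × Line × Line := (σ b₁, σ a₅, σ a₃)

lemma frame_injOn : Set.InjOn frame Utt' := by
  intro σ hσ τ hτ h
  have hmem : τ⁻¹ * σ ∈ Utt' := mul_mem (inv_mem hτ) hσ
  have hfix : ∀ y ∈ [b₁, a₅, a₃], (τ⁻¹ * σ) y = y := by
    simp only [frame, Prod.mk.injEq] at h
    simp [h]
  exact (inv_mul_eq_one.1 (eq_one_of_fixes_of_injective_profile hmem hfix profile_injective)).symm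

def cell (x : Line) : Finset Line := univ.filter fun y => profile [] y = profile [] x

lemma apply_mem_cell {σ : Equiv.Perm Line} (hσ : σ ∈ Utt') (x : Line) : σ x ∈ cell x := by
  simpa [cell] using profile_apply hσ (F := []) (by simp) x

def frameCells : Finset (Line × Line × Line) := cell b₁ ×ˢ cell a₅ ×ˢ cell a₃

lemma frame_mem_frameCells {σ : Equiv.Perm Line} (hσ : σ ∈ Utt') : frame σ ∈ frameCells := by
  simp only [frameCells, frame, mem_product, apply_mem_cell hσ, and_self]

lemma card_frameCells : frameCells.card = 8 := by decide

def reflectionProduct (v : Fin 2 × Fin 2 × Fin 2) : Equiv.Perm Line :=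
  s₁₂ ^ (v.1 : ℕ) * s₅₆ ^ (v.2.1 : ℕ) * s₁₂₃ ^ (v.2.2 : ℕ)

lemma reflectionProduct_mem (v : Fin 2 × Fin 2 × Fin 2) : reflectionProduct v ∈ Utt' :=
  mul_mem (mul_mem (pow_mem s₁₂_mem _) (pow_mem s₅₆_mem _)) (pow_mem s₁₂₃_mem _)

lemma frameCells_subset_image : ↑frameCells ⊆ frame '' Utt' := by
  have hgen : ∀ p ∈ frameCells, ∃ v, frame (reflectionProduct v) = p := by decide
  intro p hp
  obtain ⟨v, hv⟩ := hgen p hp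
  exact ⟨reflectionProduct v, reflectionProduct_mem v, hv⟩

/-- `U'_tt` has order 8. -/
theorem stmt19 : Nat.card Utt' = 8 := by
  have himage : frame '' Utt' = frameCells :=
    (Set.image_subset_iff.2 fun _ => frame_mem_frameCells).antisymm frameCells_subset_image
  calc Nat.card Utt' = (frame '' Utt').ncard := by
        rw [frame_injOn.ncard_image, ← Nat.card_coe_set_eq]; rfl
    _ = 8 := by rw [himage, Set.ncard_coe_finset, card_frameCells]
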